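/- Let M, m, T be positive integers with m ≤ M. Let Q be an M×M complex unitary matrix, F ⊆ {1,…,M} with |F| = m, Q_F the M×m submatrix of columns of Q indexed by F, W an M×M unitary matrix, and P = W Q_F Q_F^H W^H. Let p ∈ ℂ^T be nonzero, β > 0, and γ = √β · ‖p‖². Let h (a random vector in ℂ^M with E[h h^H] = Φ) and N (a random M×T complex matrix with mean zero and E[N_{k i} · conj(N_{l j})] = δ_{kl} δ_{ij}) be independent, all second moments being integrable. Define ĥ_m = (1/γ) P (γ h + N p). Then the mean square error satisfies E[‖ĥ_m − h‖²] = m/(β‖p‖²) + Σ_{ℓ ∉ F} [Q^H W^H Φ W Q]_{ℓℓ}, i.e., MSE(ĥ_m) = Var{ĥ_m} + b(ĥ_m) with Var{ĥ_m} = m/(β‖p‖²) and b(ĥ_m) = Σ_{ℓ ∉ F} [B̂]_{ℓℓ}. -/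

import Mathlib

/-!
`P = W Q_F Q_Fᴴ Wᴴ = V Vᴴ`, with `V` the columns `F` of the unitary `W Q`, is an orthogonal
projection of trace `m`. The estimation error is `ĥ - h = (P - 1) h + P (γ⁻¹ N p)`, and its two
parts are orthogonal for every outcome, so the squared error equals
`hᴴ (1 - P) h + |γ|⁻² (N p)ᴴ P (N p)` pathwise. In expectation each quadratic form becomes a
trace against a correlation matrix: white noise has `E[(N p)(N p)ᴴ] = ‖p‖² I`, giving the variance
`m ‖p‖² / γ² = m / (β ‖p‖²)`, while `tr ((1 - P) Φ) = ∑_{ℓ ∉ F} [(W Q)ᴴ Φ (W Q)]_{ℓℓ}` because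
conjugation by `W Q` preserves the trace of `Φ`.
-/

open Matrix MeasureTheory ProbabilityTheory Finset

open ComplexConjugate

section Projection

variable {R n : Type*} [CommRing R] [StarRing R] [Fintype n]

theorem star_mulVec_dotProduct_mulVec {m : Type*} [Fintype m] (A B : Matrix m n R)
    (x y : n → R) : star (A *ᵥ x) ⬝ᵥ (B *ᵥ y) = star x ⬝ᵥ ((Aᴴ * B) *ᵥ y) := by
  rw [star_mulVec, ← dotProduct_mulVec, mulVec_mulVec]

theorem isHermitian_and_isIdempotentElem_mul_conjTranspose {k : Type*} [Fintype k]
    [DecidableEq k] {V : Matrix n k R} (hV : Vᴴ * V = 1) :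
    (V * Vᴴ).IsHermitian ∧ IsIdempotentElem (V * Vᴴ) := by
  refine ⟨isHermitian_mul_conjTranspose_self V, ?_⟩
  rw [IsIdempotentElem, Matrix.mul_assoc, ← Matrix.mul_assoc Vᴴ, hV, Matrix.one_mul]

/-- Pythagoras for the orthogonal projection `P`: `(P - 1) x ⟂ P y`. -/
theorem star_dotProduct_self_of_isHermitian_of_isIdempotentElem [DecidableEq n]
    {P : Matrix n n R} (hPH : P.IsHermitian) (hPP : IsIdempotentElem P) (x y : n → R) :
    star ((P - 1) *ᵥ x + P *ᵥ y) ⬝ᵥ ((P - 1) *ᵥ x + P *ᵥ y)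
      = star x ⬝ᵥ ((1 - P) *ᵥ x) + star y ⬝ᵥ (P *ᵥ y) := by
  have hsq : (P - 1)ᴴ * (P - 1) = 1 - P := by
    rw [conjTranspose_sub, hPH.eq, conjTranspose_one, sub_mul, mul_sub, mul_sub, hPP.eq]
    noncomm_ring
  have hleft : (P - 1)ᴴ * P = 0 := by
    rw [conjTranspose_sub, hPH.eq, conjTranspose_one, sub_mul, hPP.eq, one_mul, sub_self]
  have hright : P * (P - 1) = 0 := by
    rw [mul_sub, hPP.eq, mul_one, sub_self]
  rw [star_add, add_dotProduct, dotProduct_add, dotProduct_add]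
  simp only [star_mulVec_dotProduct_mulVec, hsq, hleft, hPH.eq, hright, hPP.eq, zero_mulVec,
    dotProduct_zero, add_zero, zero_add]

end Projection

section Unitary

variable {R n : Type*} [CommRing R] [StarRing R] [Fintype n] (F : Finset n)

theorem mul_submatrix_mul_conjTranspose_mul_conjTranspose (W U : Matrix n n R) :
    W * U.submatrix id ((↑) : F → n) * (U.submatrix id ((↑) : F → n))ᴴ * Wᴴ
      = (W * U).submatrix id ((↑) : F → n) * ((W * U).submatrix id ((↑) : F → n))ᴴ := by
  rw [submatrix_mul W U id id _ Function.bijective_id, submatrix_id_id, conjTranspose_mul]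
  simp only [Matrix.mul_assoc]

variable [DecidableEq n] {U : Matrix n n R} (hU : U ∈ unitaryGroup n R)
include hU

theorem conjTranspose_mul_self_submatrix_of_mem_unitaryGroup :
    (U.submatrix id ((↑) : F → n))ᴴ * U.submatrix id ((↑) : F → n) = 1 := by
  rw [conjTranspose_submatrix, ← submatrix_mul _ _ _ _ _ Function.bijective_id,
    ← star_eq_conjTranspose, Unitary.star_mul_self_of_mem hU,
    submatrix_one _ Subtype.val_injective]

theorem trace_mul_conjTranspose_submatrix_of_mem_unitaryGroup :
    trace (U.submatrix id ((↑) : F → n) * (U.submatrix id ((↑) : F → n))ᴴ) = F.card := by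
  rw [trace_mul_comm, conjTranspose_mul_self_submatrix_of_mem_unitaryGroup F hU, trace_one,
    Fintype.card_coe]

theorem trace_sub_mul_conjTranspose_submatrix_mul_of_mem_unitaryGroup (Φ : Matrix n n R) :
    trace ((1 - U.submatrix id ((↑) : F → n) * (U.submatrix id ((↑) : F → n))ᴴ) * Φ)
      = ∑ ℓ ∈ Fᶜ, (Uᴴ * Φ * U) ℓ ℓ := by
  have htr : trace Φ = trace (Uᴴ * Φ * U) := by
    rw [trace_mul_comm, ← Matrix.mul_assoc, ← star_eq_conjTranspose,
      Unitary.mul_star_self_of_mem hU, Matrix.one_mul]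
  have htrF : trace (U.submatrix id ((↑) : F → n) * (U.submatrix id ((↑) : F → n))ᴴ * Φ)
      = ∑ ℓ ∈ F, (Uᴴ * Φ * U) ℓ ℓ := by
    rw [Matrix.mul_assoc, trace_mul_comm, conjTranspose_submatrix, ← submatrix_id_id Φ,
      ← submatrix_mul _ _ _ id _ Function.bijective_id,
      ← submatrix_mul _ _ _ id _ Function.bijective_id]
    exact Finset.sum_coe_sort F fun ℓ => (Uᴴ * Φ * U) ℓ ℓ
  rw [sub_mul, Matrix.one_mul, trace_sub, htrF, htr, trace, ← Finset.sum_add_sum_compl F]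
  simp

end Unitary

section SecondMoment

variable {Ω 𝕜 : Type*} [MeasurableSpace Ω] {μ : Measure Ω} [RCLike 𝕜]

theorem integral_finsetSum_const_mul {ι : Type*} (s : Finset ι) (c : ι → 𝕜) {f : ι → Ω → 𝕜}
    (hf : ∀ i, Integrable (f i) μ) :
    ∫ ω, ∑ i ∈ s, c i * f i ω ∂μ = ∑ i ∈ s, c i * ∫ ω, f i ω ∂μ := by
  rw [integral_finsetSum s fun i _ => (hf i).const_mul (c i)]
  simp only [integral_const_mul]

/-- The correlation matrix `E[x xᴴ]`. -/
noncomputable def secondMoment {n : Type*} (μ : Measure Ω) (x : Ω → n → 𝕜) : Matrix n n 𝕜 :=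
  Matrix.of fun k l => ∫ ω, x ω k * conj (x ω l) ∂μ

variable {n : Type*} [Fintype n]

theorem ofReal_sum_norm_sq_eq_star_dotProduct (v : n → 𝕜) :
    ((∑ i, ‖v i‖ ^ 2 : ℝ) : 𝕜) = star v ⬝ᵥ v := by
  simp [dotProduct, RCLike.conj_mul]

theorem ofReal_integral_sum_norm_sq (e : Ω → n → 𝕜) :
    ((∫ ω, ∑ i, ‖e ω i‖ ^ 2 ∂μ : ℝ) : 𝕜) = ∫ ω, star (e ω) ⬝ᵥ e ω ∂μ := by
  simp only [← integral_ofReal, ofReal_sum_norm_sq_eq_star_dotProduct]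

theorem star_dotProduct_mulVec_eq_sum (A : Matrix n n 𝕜) (v : n → 𝕜) :
    star v ⬝ᵥ (A *ᵥ v) = ∑ q : n × n, A q.1 q.2 * (v q.2 * conj (v q.1)) := by
  simp only [Fintype.sum_prod_type, dotProduct, mulVec, Finset.mul_sum, Pi.star_apply,
    RCLike.star_def]
  exact Finset.sum_congr rfl fun l _ => Finset.sum_congr rfl fun k _ => by ring

variable {x : Ω → n → 𝕜} (hx : ∀ k l, Integrable (fun ω => x ω k * conj (x ω l)) μ)
include hx

theorem integrable_star_dotProduct_mulVec (A : Matrix n n 𝕜) :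
    Integrable (fun ω => star (x ω) ⬝ᵥ (A *ᵥ x ω)) μ := by
  simp only [star_dotProduct_mulVec_eq_sum]
  exact integrable_finsetSum _ fun q _ => (hx q.2 q.1).const_mul _

theorem integral_star_dotProduct_mulVec (A : Matrix n n 𝕜) :
    ∫ ω, star (x ω) ⬝ᵥ (A *ᵥ x ω) ∂μ = trace (A * secondMoment μ x) := by
  simp only [star_dotProduct_mulVec_eq_sum]
  rw [integral_finsetSum_const_mul _ (fun q : n × n => A q.1 q.2) fun q => hx q.2 q.1,
    Fintype.sum_prod_type]
  rfl

end SecondMoment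

section WhiteNoise

variable {Ω 𝕜 n t : Type*} [MeasurableSpace Ω] {μ : Measure Ω} [RCLike 𝕜] [Fintype t]

theorem mulVec_mul_conj_mulVec (N : Matrix n t 𝕜) (p : t → 𝕜) (k l : n) :
    (N *ᵥ p) k * conj ((N *ᵥ p) l)
      = ∑ q : t × t, (p q.1 * conj (p q.2)) * (N k q.1 * conj (N l q.2)) := by
  simp only [Fintype.sum_prod_type, mulVec, dotProduct, map_sum, map_mul, Finset.sum_mul_sum]
  exact Finset.sum_congr rfl fun i _ => Finset.sum_congr rfl fun j _ => by ring

variable {N : Ω → Matrix n t 𝕜}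
  (hN : ∀ k l i j, Integrable (fun ω => N ω k i * conj (N ω l j)) μ)
include hN

theorem integrable_mulVec_mul_conj_mulVec (p : t → 𝕜) (k l : n) :
    Integrable (fun ω => (N ω *ᵥ p) k * conj ((N ω *ᵥ p) l)) μ := by
  simp only [mulVec_mul_conj_mulVec]
  exact integrable_finsetSum _ fun q _ => (hN k l q.1 q.2).const_mul _

theorem secondMoment_mulVec_of_white [DecidableEq n] [DecidableEq t]
    (hwhite : ∀ k l i j, ∫ ω, N ω k i * conj (N ω l j) ∂μ = if (k, i) = (l, j) then 1 else 0)
    (p : t → 𝕜) :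
    secondMoment μ (fun ω => N ω *ᵥ p) = (∑ j, ‖p j‖ ^ 2) • (1 : Matrix n n 𝕜) := by
  ext k l
  simp only [secondMoment, of_apply, mulVec_mul_conj_mulVec]
  rw [integral_finsetSum_const_mul _ (fun q : t × t => p q.1 * conj (p q.2))
    fun q => hN k l q.1 q.2]
  simp only [hwhite, Prod.mk.injEq, Matrix.smul_apply, one_apply]
  by_cases hkl : k = l
  · simp [hkl, Fintype.sum_prod_type, RCLike.mul_conj, RCLike.real_smul_eq_coe_mul]
  · simp [hkl]

end WhiteNoise

section Estimator

variable {𝕜 n : Type*} [RCLike 𝕜] [Fintype n] [DecidableEq n]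

theorem star_dotProduct_self_estimationError {P : Matrix n n 𝕜} (hPH : P.IsHermitian)
    (hPP : IsIdempotentElem P) {γ : 𝕜} (hγ : γ ≠ 0) (x y : n → 𝕜) :
    star (γ⁻¹ • (P *ᵥ (γ • x + y)) - x) ⬝ᵥ (γ⁻¹ • (P *ᵥ (γ • x + y)) - x)
      = star x ⬝ᵥ ((1 - P) *ᵥ x) + (‖γ‖ ^ 2)⁻¹ • (star y ⬝ᵥ (P *ᵥ y)) := by
  have hsplit : γ⁻¹ • (P *ᵥ (γ • x + y)) - x = (P - 1) *ᵥ x + P *ᵥ (γ⁻¹ • y) := by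
    rw [mulVec_add, mulVec_smul, smul_add, smul_smul, inv_mul_cancel₀ hγ, one_smul,
      sub_mulVec, one_mulVec, mulVec_smul]
    abel
  rw [hsplit, star_dotProduct_self_of_isHermitian_of_isIdempotentElem hPH hPP, mulVec_smul,
    star_smul, smul_dotProduct, dotProduct_smul, smul_smul, RCLike.star_def, RCLike.conj_mul,
    norm_inv, ← RCLike.ofReal_pow, inv_pow, ← RCLike.real_smul_eq_coe_smul]

variable {Ω : Type*} [MeasurableSpace Ω] {μ : Measure Ω}

theorem integral_star_dotProduct_self_estimationError {P : Matrix n n 𝕜} (hPH : P.IsHermitian)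
    (hPP : IsIdempotentElem P) {γ : 𝕜} (hγ : γ ≠ 0) {x y : Ω → n → 𝕜}
    (hx : ∀ k l, Integrable (fun ω => x ω k * conj (x ω l)) μ)
    (hy : ∀ k l, Integrable (fun ω => y ω k * conj (y ω l)) μ) :
    ∫ ω, star (γ⁻¹ • (P *ᵥ (γ • x ω + y ω)) - x ω) ⬝ᵥ (γ⁻¹ • (P *ᵥ (γ • x ω + y ω)) - x ω) ∂μ
      = trace ((1 - P) * secondMoment μ x) + (‖γ‖ ^ 2)⁻¹ • trace (P * secondMoment μ y) := by
  simp only [star_dotProduct_self_estimationError hPH hPP hγ]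
  rw [integral_add (integrable_star_dotProduct_mulVec hx _)
      ((integrable_star_dotProduct_mulVec hy _).fun_smul _),
    integral_smul, integral_star_dotProduct_mulVec hx, integral_star_dotProduct_mulVec hy]

end Estimator

theorem mse_of_reduced_rank_estimator_general
    (M m T : ℕ)
    (Q : Matrix (Fin M) (Fin M) ℂ) (hQ : Qᴴ * Q = 1)
    (F : Finset (Fin M)) (hF : F.card = m)
    (QF : Matrix (Fin M) {ℓ : Fin M // ℓ ∈ F} ℂ)
    (hQF : ∀ (i : Fin M) (j : {ℓ : Fin M // ℓ ∈ F}), QF i j = Q i j)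
    (W : Matrix (Fin M) (Fin M) ℂ) (hW : Wᴴ * W = 1)
    (P : Matrix (Fin M) (Fin M) ℂ) (hP : P = W * QF * QFᴴ * Wᴴ)
    (p : Fin T → ℂ) (hp : p ≠ 0)
    (β : ℝ) (hβ : 0 < β)
    (γ : ℂ) (hγ : γ = ((Real.sqrt β * ∑ j, ‖p j‖ ^ 2 : ℝ) : ℂ))
    {Ω : Type*} [MeasurableSpace Ω] (μ : Measure Ω)
    (h : Ω → (Fin M → ℂ)) (N : Ω → Matrix (Fin M) (Fin T) ℂ)
    -- integrable second moments
    (hinth : ∀ k l : Fin M,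
      Integrable (fun ω => h ω k * (starRingEnd ℂ) (h ω l)) μ)
    (hintN : ∀ (k l : Fin M) (i j : Fin T),
      Integrable (fun ω => N ω k i * (starRingEnd ℂ) (N ω l j)) μ)
    -- channel correlation matrix
    (Φ : Matrix (Fin M) (Fin M) ℂ)
    (hΦ : ∀ k l : Fin M, ∫ ω, h ω k * (starRingEnd ℂ) (h ω l) ∂μ = Φ k l)
    -- zero-mean, white, unit-variance noise
    (hNcorr : ∀ (k l : Fin M) (i j : Fin T),
      ∫ ω, N ω k i * (starRingEnd ℂ) (N ω l j) ∂μ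
        = if (k, i) = (l, j) then 1 else 0)
    -- the rank-m reduced-rank estimator
    (hhat : Ω → (Fin M → ℂ))
    (hhat_def : ∀ ω, hhat ω = γ⁻¹ • (P *ᵥ (γ • h ω + N ω *ᵥ p))) :
    ((∫ ω, ∑ i, ‖(hhat ω - h ω) i‖ ^ 2 ∂μ : ℝ) : ℂ)
      = ((m / (β * ∑ j, ‖p j‖ ^ 2) : ℝ) : ℂ)
        + ∑ ℓ ∈ Fᶜ, (Qᴴ * Wᴴ * Φ * W * Q) ℓ ℓ := by
  set s := ∑ j, ‖p j‖ ^ 2 with hs_def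
  have hs : 0 < s := by
    obtain ⟨j, hj⟩ := Function.ne_iff.mp hp
    exact Finset.sum_pos' (fun j _ => by positivity) ⟨j, mem_univ j, by positivity⟩
  have hγ0 : γ ≠ 0 := by rw [hγ]; exact_mod_cast (by positivity : 0 < √β * s).ne'
  have hU : W * Q ∈ unitaryGroup (Fin M) ℂ :=
    mul_mem (mem_unitaryGroup_iff'.2 hW) (mem_unitaryGroup_iff'.2 hQ)
  set V := (W * Q).submatrix id ((↑) : F → Fin M)
  have hPV : P = V * Vᴴ := by
    rw [hP, show QF = Q.submatrix id (↑) from Matrix.ext hQF]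
    exact mul_submatrix_mul_conjTranspose_mul_conjTranspose F W Q
  obtain ⟨hPH, hPP⟩ : P.IsHermitian ∧ IsIdempotentElem P := hPV ▸
    isHermitian_and_isIdempotentElem_mul_conjTranspose
      (conjTranspose_mul_self_submatrix_of_mem_unitaryGroup F hU)
  refine (ofReal_integral_sum_norm_sq fun ω => hhat ω - h ω).trans ?_
  simp only [hhat_def]
  rw [integral_star_dotProduct_self_estimationError hPH hPP hγ0 hinth
      (integrable_mulVec_mul_conj_mulVec hintN p),
    secondMoment_mulVec_of_white hintN hNcorr,
    show secondMoment μ h = Φ from Matrix.ext hΦ, Matrix.mul_smul, Matrix.mul_one, trace_smul,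
    hPV, trace_sub_mul_conjTranspose_submatrix_mul_of_mem_unitaryGroup F hU,
    trace_mul_conjTranspose_submatrix_of_mem_unitaryGroup F hU, hF]
  have hnorm : ‖γ‖ ^ 2 = β * s ^ 2 := by
    rw [hγ, Complex.norm_real, Real.norm_of_nonneg (by positivity), mul_pow,
      Real.sq_sqrt hβ.le]
  have hvar : (β * s ^ 2)⁻¹ * s * m = m / (β * s) := by field_simp
  rw [← hs_def, hnorm, smul_smul, Complex.real_smul, ← Complex.ofReal_natCast,
    ← Complex.ofReal_mul, hvar, add_comm]
  simp only [conjTranspose_mul, Matrix.mul_assoc]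

/-- Mean square error decomposition of the rank-`m` phase-modulated reduced-rank channel
estimator `ĥ_m = (1/γ) P (γ h + N p)`:
`MSE(ĥ_m) = m/(β‖p‖²) + ∑_{ℓ ∉ F} [Qᴴ Wᴴ Φ W Q]ℓℓ`. -/
theorem mse_of_reduced_rank_estimator
    (M m T : ℕ) (hM : 0 < M) (hm : m ≤ M) (hT : 0 < T)
    (Q : Matrix (Fin M) (Fin M) ℂ) (hQ : Qᴴ * Q = 1)
    (F : Finset (Fin M)) (hF : F.card = m)
    (QF : Matrix (Fin M) {ℓ : Fin M // ℓ ∈ F} ℂ)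
    (hQF : ∀ (i : Fin M) (j : {ℓ : Fin M // ℓ ∈ F}), QF i j = Q i j)
    (W : Matrix (Fin M) (Fin M) ℂ) (hW : Wᴴ * W = 1)
    (P : Matrix (Fin M) (Fin M) ℂ) (hP : P = W * QF * QFᴴ * Wᴴ)
    (p : Fin T → ℂ) (hp : p ≠ 0)
    (β : ℝ) (hβ : 0 < β)
    (γ : ℂ) (hγ : γ = ((Real.sqrt β * ∑ j, ‖p j‖ ^ 2 : ℝ) : ℂ))
    {Ω : Type*} [MeasurableSpace Ω] (μ : Measure Ω) [IsProbabilityMeasure μ]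
    (h : Ω → (Fin M → ℂ)) (N : Ω → Matrix (Fin M) (Fin T) ℂ)
    -- independence of the channel vector and the noise matrix
    (hindep : IndepFun h (fun ω => fun (k : Fin M) (i : Fin T) => N ω k i) μ)
    -- integrable second moments
    (hinth : ∀ k l : Fin M,
      Integrable (fun ω => h ω k * (starRingEnd ℂ) (h ω l)) μ)
    (hintN : ∀ (k l : Fin M) (i j : Fin T),
      Integrable (fun ω => N ω k i * (starRingEnd ℂ) (N ω l j)) μ)
    (hintmix : ∀ (k l : Fin M) (i : Fin T),
      Integrable (fun ω => h ω k * (starRingEnd ℂ) (N ω l i)) μ)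
    -- channel correlation matrix
    (Φ : Matrix (Fin M) (Fin M) ℂ)
    (hΦ : ∀ k l : Fin M, ∫ ω, h ω k * (starRingEnd ℂ) (h ω l) ∂μ = Φ k l)
    -- zero-mean, white, unit-variance noise
    (hNmean : ∀ (k : Fin M) (i : Fin T), ∫ ω, N ω k i ∂μ = 0)
    (hNcorr : ∀ (k l : Fin M) (i j : Fin T),
      ∫ ω, N ω k i * (starRingEnd ℂ) (N ω l j) ∂μ
        = if (k, i) = (l, j) then 1 else 0)
    -- the rank-m reduced-rank estimator
    (hhat : Ω → (Fin M → ℂ))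
    (hhat_def : ∀ ω, hhat ω = γ⁻¹ • (P *ᵥ (γ • h ω + N ω *ᵥ p))) :
    ((∫ ω, ∑ i, ‖(hhat ω - h ω) i‖ ^ 2 ∂μ : ℝ) : ℂ)
      = ((m / (β * ∑ j, ‖p j‖ ^ 2) : ℝ) : ℂ)
        + ∑ ℓ ∈ Fᶜ, (Qᴴ * Wᴴ * Φ * W * Q) ℓ ℓ :=
  mse_of_reduced_rank_estimator_general M m T Q hQ F hF QF hQF W hW P hP p hp β hβ γ hγ μ h N hinth
    hintN Φ hΦ hNcorr hhat hhat_def
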